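/- Let G be a finite simple graph in which no connected component is a single edge or an isolated vertex; equivalently, every vertex has degree at least 1 and for every edge {i, j} of G, deg_G(i) ≥ 2 or deg_G(j) ≥ 2. For darts u ≠ v with π(u) = π(v), let C(u, v) denote the 4-cycle with vertices {u, ū, v, v̄} and edges {u, ū}, {v, v̄}, {ū, v}, {u, v̄}. Then: (a) each of the four pairs {u, ū}, {v, v̄}, {ū, v}, {u, v̄} is an edge of the tangent graph tG; (b) every dart of G belongs to {u, ū, v, v̄} for some pair of darts u ≠ v with π(u) = π(v); and (c) for every edge {a, b} of tG there exist darts u ≠ v with π(u) = π(v) such that {a, b} is one of the four edges {u, ū}, {v, v̄}, {ū, v}, {u, v̄}. -/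

import Mathlib

open Finset SimpleGraph

/-- The tangent graph `tG` of a simple graph `G`: vertices are the darts of `G`,
with `u, v` adjacent iff `π₊(u) = π(v)` or `π(u) = π₊(v)`. -/
def tangentGraph {V : Type*} (G : SimpleGraph V) : SimpleGraph G.Dart where
  Adj u v := u.snd = v.fst ∨ u.fst = v.snd
  symm := ⟨fun u v h => h.symm.imp Eq.symm Eq.symm⟩
  loopless := ⟨fun u h => h.elim (fun h1 => u.snd_ne_fst h1) (fun h2 => u.fst_ne_snd h2)⟩

/-- The complete tangent graph `τG` of a simple graph `G`: vertices are the darts of `G`,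
with `u, v` adjacent iff their base points are adjacent in `G`. -/
def completeTangentGraph {V : Type*} (G : SimpleGraph V) : SimpleGraph G.Dart where
  Adj u v := G.Adj u.fst v.fst
  symm := ⟨fun u v h => h.symm⟩
  loopless := ⟨fun u h => G.ne_of_adj h rfl⟩

instance {V : Type*} [DecidableEq V] (G : SimpleGraph V) :
    DecidableRel (tangentGraph G).Adj :=
  fun u v => inferInstanceAs (Decidable (u.snd = v.fst ∨ u.fst = v.snd))

instance {V : Type*} (G : SimpleGraph V) [DecidableRel G.Adj] :
    DecidableRel (completeTangentGraph G).Adj :=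
  fun u v => inferInstanceAs (Decidable (G.Adj u.fst v.fst))

/-- The darts of `G` based at the vertex `i`. -/
def dartsAt {V : Type*} [Fintype V] [DecidableEq V] (G : SimpleGraph V)
    [DecidableRel G.Adj] (i : V) : Finset G.Dart :=
  Finset.univ.filter fun u => u.fst = i

/-- The coefficient function `dφ` of the gradient of `φ`. -/
def dop {V : Type*} (G : SimpleGraph V) (φ : V → ℝ) (u : G.Dart) : ℝ :=
  φ u.snd - φ u.fst

/-- The Laplacian of `φ : V → ℝ` on `G`, `Δφ(i) = -2·Σ_{π(u)=i} dφ(u)`. -/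
def gLap {V : Type*} [Fintype V] [DecidableEq V] (G : SimpleGraph V)
    [DecidableRel G.Adj] (φ : V → ℝ) (i : V) : ℝ :=
  -2 * ∑ u ∈ dartsAt G i, dop G φ u

/-- The Laplacian of a real function on the vertices of an arbitrary finite simple graph:
`Δ_H h(x) = -2·Σ_{y ~ x} (h y - h x)`. -/
def lap {W : Type*} [Fintype W] (H : SimpleGraph W) [DecidableRel H.Adj]
    (h : W → ℝ) (x : W) : ℝ :=
  -2 * ∑ y ∈ H.neighborFinset x, (h y - h x)

/-- The divergence of `f : Darts(G) → ℝ`, `Div f(i) = Σ_{π(u)=i} (f(ū) - f(u))`. -/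
def divg {V : Type*} [Fintype V] [DecidableEq V] (G : SimpleGraph V)
    [DecidableRel G.Adj] (f : G.Dart → ℝ) (i : V) : ℝ :=
  ∑ u ∈ dartsAt G i, (f u.symm - f u)

/-!
An edge `{a, b}` of `tG` with `π₊(a) = π(b)` (resp. `π(a) = π₊(b)`) is the edge `{ū, v}` of
`C(ā, b)` (resp. `{u, v̄}` of `C(a, b̄)`), unless `b = ā`. The edges `{a, ā}`, and the darts
themselves, lie in a 4-cycle as soon as some endpoint of the underlying edge of `G` has
degree at least 2, which is the hypothesis.
-/

namespace SimpleGraph.Dart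

variable {V : Type*} {G : SimpleGraph V}

lemma exists_ne_fst_eq_of_two_le_degree (w : G.Dart) [Fintype (G.neighborSet w.fst)]
    (hw : 2 ≤ G.degree w.fst) : ∃ v : G.Dart, v ≠ w ∧ v.fst = w.fst := by
  rw [← card_neighborFinset_eq_degree] at hw
  obtain ⟨k, hk, hkw⟩ := Finset.exists_mem_ne hw w.snd
  exact ⟨⟨(w.fst, k), (G.mem_neighborFinset _ _).1 hk⟩,
    fun h => hkw (congrArg (fun d : G.Dart => d.snd) h), rfl⟩

lemma exists_ne_fst_eq_of_forall_adj_two_le_degree [Fintype V] [DecidableRel G.Adj]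
    (hG : ∀ i j : V, G.Adj i j → 2 ≤ G.degree i ∨ 2 ≤ G.degree j) (w : G.Dart) :
    ∃ u v : G.Dart, u ≠ v ∧ u.fst = v.fst ∧ (u = w ∨ u = w.symm) := by
  rcases hG w.fst w.snd w.adj with hw | hw
  · obtain ⟨v, hvw, hv⟩ := w.exists_ne_fst_eq_of_two_le_degree hw
    exact ⟨w, v, hvw.symm, hv.symm, Or.inl rfl⟩
  · obtain ⟨v, hvw, hv⟩ := w.symm.exists_ne_fst_eq_of_two_le_degree hw
    exact ⟨w.symm, v, hvw.symm, hv.symm, Or.inr rfl⟩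

lemma exists_ne_fst_eq_of_tangentGraph_adj {a b : G.Dart} (hab : (tangentGraph G).Adj a b)
    (hba : b ≠ a.symm) : ∃ u v : G.Dart, u ≠ v ∧ u.fst = v.fst ∧
      (s(a, b) = s(u.symm, v) ∨ s(a, b) = s(u, v.symm)) := by
  rcases hab with h | h
  · exact ⟨a.symm, b, hba.symm, h, Or.inl (by rw [symm_symm])⟩
  · refine ⟨a, b.symm, fun he => hba ?_, h, Or.inr (by rw [symm_symm])⟩
    rw [he, symm_symm]

end SimpleGraph.Dart

theorem tangentGraph_union_of_four_cycles_general {V : Type*} [Fintype V]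
    (G : SimpleGraph V) [DecidableRel G.Adj]
    (h2 : ∀ i j : V, G.Adj i j → 2 ≤ G.degree i ∨ 2 ≤ G.degree j) :
    (∀ u v : G.Dart, u ≠ v → u.fst = v.fst →
        (tangentGraph G).Adj u u.symm ∧ (tangentGraph G).Adj v v.symm ∧
        (tangentGraph G).Adj u.symm v ∧ (tangentGraph G).Adj u v.symm) ∧
    (∀ w : G.Dart, ∃ u v : G.Dart, u ≠ v ∧ u.fst = v.fst ∧
        (w = u ∨ w = u.symm ∨ w = v ∨ w = v.symm)) ∧
    (∀ a b : G.Dart, (tangentGraph G).Adj a b → ∃ u v : G.Dart, u ≠ v ∧ u.fst = v.fst ∧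
        (s(a, b) = s(u, u.symm) ∨ s(a, b) = s(v, v.symm) ∨
          s(a, b) = s(u.symm, v) ∨ s(a, b) = s(u, v.symm))) := by
  refine ⟨fun u v _ huv => ⟨Or.inl rfl, Or.inl rfl, Or.inl huv, Or.inr huv⟩, fun w => ?_,
    fun a b hab => ?_⟩
  · obtain ⟨u, v, huv, hf, rfl | rfl⟩ := Dart.exists_ne_fst_eq_of_forall_adj_two_le_degree h2 w
    · exact ⟨u, v, huv, hf, Or.inl rfl⟩
    · exact ⟨w.symm, v, huv, hf, Or.inr (Or.inl w.symm_symm.symm)⟩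
  by_cases hba : b = a.symm
  · subst hba
    obtain ⟨u, v, huv, hf, rfl | rfl⟩ := Dart.exists_ne_fst_eq_of_forall_adj_two_le_degree h2 a
    · exact ⟨u, v, huv, hf, Or.inl rfl⟩
    · exact ⟨a.symm, v, huv, hf, Or.inl (by rw [Dart.symm_symm, Sym2.eq_swap])⟩
  · obtain ⟨u, v, huv, hf, h | h⟩ := Dart.exists_ne_fst_eq_of_tangentGraph_adj hab hba
    · exact ⟨u, v, huv, hf, Or.inr (Or.inr (Or.inl h))⟩
    · exact ⟨u, v, huv, hf, Or.inr (Or.inr (Or.inr h))⟩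

/-- If no component of `G` is a single edge or an isolated vertex, then
(a) for darts `u ≠ v` with `π(u) = π(v)`, the four pairs `{u,ū}, {v,v̄}, {ū,v}, {u,v̄}`
are edges of `tG`; (b) every dart lies in such a 4-cycle `C(u,v)`; and (c) every edge of
`tG` is one of the four edges of such a 4-cycle. -/
theorem tangentGraph_union_of_four_cycles {V : Type*} [Fintype V] [DecidableEq V]
    (G : SimpleGraph V) [DecidableRel G.Adj]
    (h1 : ∀ i : V, 1 ≤ G.degree i)
    (h2 : ∀ i j : V, G.Adj i j → 2 ≤ G.degree i ∨ 2 ≤ G.degree j) :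
    (∀ u v : G.Dart, u ≠ v → u.fst = v.fst →
        (tangentGraph G).Adj u u.symm ∧ (tangentGraph G).Adj v v.symm ∧
        (tangentGraph G).Adj u.symm v ∧ (tangentGraph G).Adj u v.symm) ∧
    (∀ w : G.Dart, ∃ u v : G.Dart, u ≠ v ∧ u.fst = v.fst ∧
        (w = u ∨ w = u.symm ∨ w = v ∨ w = v.symm)) ∧
    (∀ a b : G.Dart, (tangentGraph G).Adj a b → ∃ u v : G.Dart, u ≠ v ∧ u.fst = v.fst ∧
        (s(a, b) = s(u, u.symm) ∨ s(a, b) = s(v, v.symm) ∨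
          s(a, b) = s(u.symm, v) ∨ s(a, b) = s(u, v.symm))) :=
  tangentGraph_union_of_four_cycles_general G h2
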